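/- arXiv:math/0502304 — 3 statements merged into one kernel-verified Lean document; each statement's English description precedes it below -/
import Mathlib

section
/- (Theorem 1: structure of the phase diagram.) Under the basic assumptions on the disorder, there exists an increasing function h_c : [0,∞) → [0,∞] such that the localized region satisfies L = {(λ,h) : h < h_c(λ)} and the delocalized region satisfies D = {(λ,h) : h ≥ h_c(λ)}. Moreover h_c is continuous on [0,∞) if it is everywhere finite, and otherwise it is continuous on [0, sup{λ : h_c(λ) < ∞}). -/
open MeasureTheory ProbabilityTheory Filter Finset

noncomputable section

/-- Indicator of a proposition. -/
def ind (p : Prop) : ℝ :=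
  letI := Classical.propDecidable p
  if p then 1 else 0

/-- Extend a finite sequence of steps (`true` = step up) to an infinite one. -/
def extendPath (N : ℕ) (ε : Fin N → Bool) : ℕ → Bool :=
  fun j => if h : j < N then ε ⟨j, h⟩ else false

/-- Position `S_n` of the simple random walk with steps `ε`. -/
def walkPos (ε : ℕ → Bool) (n : ℕ) : ℤ :=
  ∑ j ∈ Finset.range n, (if ε j then (1 : ℤ) else -1)

/-- Sign of `S_n`, with the convention `sign S_{2n} = sign S_{2n-1}` whenever `S_{2n} = 0`. -/
def sgn (ε : ℕ → Bool) (n : ℕ) : ℤ :=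
  if 0 < walkPos ε n then 1
  else if walkPos ε n < 0 then -1
  else if 0 < walkPos ε (n - 1) then 1 else -1

/-- The set of times `1 ≤ n ≤ N` spent in the lower half plane (`Δ_n = 1`). -/
def lowSet (ε : ℕ → Bool) (N : ℕ) : Finset ℕ :=
  (Finset.Icc 1 N).filter (fun n => sgn ε n = -1)

/-- `𝒩 = Σ_{n=1}^N Δ_n`, the number of monomers in the lower half plane. -/
def NVis (ε : ℕ → Bool) (N : ℕ) : ℕ := (lowSet ε N).card

/-- `max 𝒜`, the last exit point from the lower half plane (`𝒜 = lowSet ∪ {0}`). -/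
def maxA (ε : ℕ → Bool) (N : ℕ) : ℕ := (lowSet ε N).sup id

/-- Expectation, under the simple random walk law, of a function of the first `N` steps. -/
def pathE (N : ℕ) (f : (ℕ → Bool) → ℝ) : ℝ :=
  (1 / 2 : ℝ) ^ N * ∑ ε : Fin N → Bool, f (extendPath N ε)

/-- Boltzmann weight `exp(-2λ Σ_{n=1}^N (ω_n + h) Δ_n)`. -/
def weight (lam h : ℝ) (ω : ℕ → ℝ) (N : ℕ) (ε : ℕ → Bool) : ℝ :=
  Real.exp (-(2 * lam) * ∑ n ∈ lowSet ε N, (ω n + h))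

/-- Restricted partition function `Z_{N,ω}(A)`. -/
def Zev (lam h : ℝ) (N : ℕ) (ω : ℕ → ℝ) (A : (ℕ → Bool) → Prop) : ℝ :=
  pathE N (fun ε => weight lam h ω N ε * ind (A ε))

/-- Endpoint constraint: `a = true` is the constrained case `S_N = 0`, `a = false` the free one. -/
def endOK (a : Bool) (N : ℕ) (ε : ℕ → Bool) : Prop := a = true → walkPos ε N = 0

/-- Partition function `Z^a_{N,ω}` (`a = false`: free, `a = true`: constrained). -/
def Zpart (a : Bool) (lam h : ℝ) (N : ℕ) (ω : ℕ → ℝ) : ℝ :=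
  Zev lam h N ω (endOK a N)

/-- Partition function `Z̃^a_{N,ω}` with the `sign` form of the Hamiltonian. -/
def Ztilde (a : Bool) (lam h : ℝ) (N : ℕ) (ω : ℕ → ℝ) : ℝ :=
  pathE N (fun ε =>
    Real.exp (lam * ∑ n ∈ Finset.Icc 1 N, (ω n + h) * (sgn ε n : ℝ)) * ind (endOK a N ε))

/-- Polymer measure of the event `A`: `P^a_{N,ω}(A)`. -/
def polyProb (a : Bool) (lam h : ℝ) (N : ℕ) (ω : ℕ → ℝ) (A : (ℕ → Bool) → Prop) : ℝ :=
  Zev lam h N ω (fun ε => A ε ∧ endOK a N ε) / Zpart a lam h N ω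

/-- Basic assumptions: `P` is the law of an IID sequence with marginal `μ`,
`μ` symmetric, of unit variance and with finite exponential moments near `0`. -/
def BasicSetup (mu : Measure ℝ) (P : Measure (ℕ → ℝ)) : Prop :=
  IsProbabilityMeasure mu ∧ IsProbabilityMeasure P ∧
    mu.map (fun x => -x) = mu ∧
    (∫ x, x ^ 2 ∂mu) = 1 ∧
    (∃ t₀ > (0 : ℝ), ∀ t : ℝ, |t| ≤ t₀ → Integrable (fun x => Real.exp (t * x)) mu) ∧
    (∀ n : ℕ, P.map (fun ω => ω n) = mu) ∧
    iIndepFun (fun n (ω : ℕ → ℝ) => ω n) P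

/-- Deviation inequality above the mean, with constant `C`, for convex Lipschitz functions
(Lipschitz with respect to the Euclidean distance) of `ω_1, …, ω_N`. -/
def DevIneq (P : Measure (ℕ → ℝ)) (C : ℝ) : Prop :=
  0 < C ∧
    ∀ (N : ℕ) (g : (Fin N → ℝ) → ℝ) (K : ℝ), 0 ≤ K →
      ConvexOn ℝ Set.univ g →
      (∀ x y : Fin N → ℝ, |g x - g y| ≤ K * Real.sqrt (∑ i, (x i - y i) ^ 2)) →
      Integrable (fun ω => g (fun i => ω (i + 1))) P →
      ∀ t : ℝ, 0 ≤ t →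
        (P {ω | (∫ ω', g (fun i => ω' (i + 1)) ∂P) + t ≤ g (fun i => ω (i + 1))}).toReal
          ≤ C * Real.exp (-t ^ 2 / (C * K ^ 2))

end

open MeasureTheory ProbabilityTheory Filter Finset
open scoped ENNReal NNReal

/-!
Write `g λ h = f(λ,h) - λh`. Since `sign S_n = 1 - 2 Δ_n`, along even `N` one has
`(1/N) log Z̃_N - λh = λ (1/N) Σ ω_n + (1/N) log Z_N(λ, λh)` with
`Z_N(λ, v) = E[exp(-2λ Σ_{n ≤ N} ω_n Δ_n - 2v Σ_{n ≤ N} Δ_n)]`, so by the strong law `g` is the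
almost sure limit of `(1/N) log Z_N(λ, λh)`. Pathwise, `Z_N` is at least the probability
`≥ N⁻²` (a Catalan count) that the walk stays nonnegative, is nonincreasing and `2N`-Lipschitz
in `v` on the log scale, and is log-convex in `(λ, v)` by Hölder. Hence `g ≥ 0`, `g(λ, ·)` is
nonincreasing and continuous, `g(0, ·) = 0` and `(λ, v) ↦ g(λ, v/λ)` is convex. Then
`h_c(λ) = sup {h : g(λ,h) > 0}` separates `L` from `D`; convexity along segments through the
origin makes `h_c` nondecreasing, and convexity of the zero set `{v ≥ λ h_c(λ)}` of `g` makes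
`λ ↦ λ h_c(λ)` convex, hence continuous where finite. At `λ = 0`, the annealed bound
`𝔼 Z_N ≤ 1` for `M(-2λ) ≤ e^{2λh}`, Markov and Borel–Cantelli give `g(λ,h) ≤ 0`, and
`M(-2λ) = 1 + o(λ)` because `M'(0) = 𝔼 ω_1 = 0`; so `h_c(λ) → 0`.
-/

open Set Topology

/-- Axiomatizes `g λ h = f(λ,h) - λh` on the quadrant `λ, h ≥ 0`; in the variables
`(λ, v) = (λ, λh)` the field `convex_comb_le` is convexity of `g`. -/
structure IsExcessFreeEnergy (g : ℝ → ℝ → ℝ) : Prop where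
  nonneg : ∀ lam h, 0 ≤ lam → 0 ≤ h → 0 ≤ g lam h
  antitoneOn : ∀ lam, 0 ≤ lam → AntitoneOn (g lam) (Ici 0)
  le_add_mul_sub : ∀ lam h h', 0 ≤ lam → 0 ≤ h → h ≤ h' →
    g lam h ≤ g lam h' + 2 * lam * (h' - h)
  zero_lam : ∀ h, 0 ≤ h → g 0 h = 0
  convex_comb_le : ∀ l₁ h₁ l₂ h₂ t H, 0 ≤ l₁ → 0 ≤ h₁ → 0 ≤ l₂ → 0 ≤ h₂ → 0 ≤ t → t ≤ 1 →
    0 ≤ H → (t * l₁ + (1 - t) * l₂) * H = t * (l₁ * h₁) + (1 - t) * (l₂ * h₂) →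
    g (t * l₁ + (1 - t) * l₂) H ≤ t * g l₁ h₁ + (1 - t) * g l₂ h₂
  eventually_nonpos : ∀ ε > 0, ∀ᶠ lam in 𝓝[>] 0, g lam ε ≤ 0

noncomputable def criticalCurve (g : ℝ → ℝ → ℝ) (lam : ℝ) : ℝ≥0∞ :=
  ⨆ (h : ℝ) (_ : 0 ≤ h ∧ 0 < g lam h), ENNReal.ofReal h

namespace IsExcessFreeEnergy

variable {g : ℝ → ℝ → ℝ} {lam h : ℝ}

lemma exists_gt_pos (hg : IsExcessFreeEnergy g) (hlam : 0 ≤ lam) (hh : 0 ≤ h)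
    (hpos : 0 < g lam h) : ∃ h' > h, 0 < g lam h' := by
  set δ := g lam h / (4 * lam + 1)
  have hδ : 0 < δ := by positivity
  have hsmall : 2 * lam * δ ≤ g lam h / 2 := by
    have h4 : (4 * lam + 1) * δ = g lam h := mul_div_cancel₀ _ (by positivity)
    nlinarith
  refine ⟨h + δ, by linarith, ?_⟩
  have := hg.le_add_mul_sub lam h (h + δ) hlam hh (by linarith)
  rw [add_sub_cancel_left] at this
  linarith

lemma ofReal_lt_criticalCurve_iff (hg : IsExcessFreeEnergy g) (hlam : 0 ≤ lam) (hh : 0 ≤ h) :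
    ENNReal.ofReal h < criticalCurve g lam ↔ 0 < g lam h := by
  constructor
  · intro hlt
    obtain ⟨h', ⟨hh', hpos⟩, hlt'⟩ := by
      simpa only [criticalCurve, lt_iSup_iff, exists_prop] using hlt
    exact hpos.trans_le (hg.antitoneOn lam hlam hh hh'
      ((ENNReal.ofReal_lt_ofReal_iff_of_nonneg hh).mp hlt').le)
  · intro hpos
    obtain ⟨h', hhh', hpos'⟩ := hg.exists_gt_pos hlam hh hpos
    calc ENNReal.ofReal h < ENNReal.ofReal h' :=
          (ENNReal.ofReal_lt_ofReal_iff (by linarith)).mpr hhh'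
      _ ≤ criticalCurve g lam := le_iSup₂_of_le h' ⟨by linarith, hpos'⟩ le_rfl

lemma criticalCurve_le_ofReal_iff (hg : IsExcessFreeEnergy g) (hlam : 0 ≤ lam) (hh : 0 ≤ h) :
    criticalCurve g lam ≤ ENNReal.ofReal h ↔ g lam h = 0 := by
  rw [← not_lt, hg.ofReal_lt_criticalCurve_iff hlam hh, not_lt]
  exact ⟨fun hle => le_antisymm hle (hg.nonneg lam h hlam hh), le_of_eq⟩

lemma le_of_lam_le (hg : IsExcessFreeEnergy g) {l₁ l₂ : ℝ} (hl₁ : 0 ≤ l₁) (hl : l₁ ≤ l₂)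
    (hh : 0 ≤ h) : g l₁ h ≤ g l₂ h := by
  obtain rfl | hl₂ := (hl₁.trans hl).eq_or_lt
  · rw [le_antisymm hl hl₁]
  set t := l₁ / l₂
  have ht1 : t ≤ 1 := (div_le_one hl₂).mpr hl
  have hl₁t : t * l₂ + (1 - t) * 0 = l₁ := by simp [t, hl₂.ne']
  have key := hg.convex_comb_le l₂ h 0 0 t h hl₂.le hh le_rfl le_rfl (by positivity) ht1 hh
    (by rw [hl₁t]; simp only [t]; field_simp; ring)
  rw [hl₁t, hg.zero_lam 0 le_rfl, mul_zero, add_zero] at key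
  nlinarith [hg.nonneg l₂ h hl₂.le hh]

lemma monotoneOn_criticalCurve (hg : IsExcessFreeEnergy g) :
    MonotoneOn (criticalCurve g) (Ici 0) := fun _ hl₁ _ _ hl =>
  biSup_mono fun _ hh => ⟨hh.1, hh.2.trans_le (hg.le_of_lam_le hl₁ hl hh.1)⟩

lemma criticalCurve_zero (hg : IsExcessFreeEnergy g) : criticalCurve g 0 = 0 :=
  le_antisymm (iSup₂_le fun h hh => absurd hh.2 (by simp [hg.zero_lam h hh.1])) zero_le

lemma continuousWithinAt_criticalCurve_zero (hg : IsExcessFreeEnergy g) :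
    ContinuousWithinAt (criticalCurve g) (Ici 0) 0 := by
  rw [ContinuousWithinAt, hg.criticalCurve_zero, ENNReal.tendsto_nhds_zero]
  intro ε hε
  obtain ⟨r, -, hr, hrε⟩ := ENNReal.lt_iff_exists_real_btwn.mp hε
  have hr0 : 0 < r := ENNReal.ofReal_pos.mp hr
  have hev := eventually_nhdsWithin_iff.mp (hg.eventually_nonpos r hr0)
  filter_upwards [eventually_nhdsWithin_of_eventually_nhds hev, self_mem_nhdsWithin]
    with lam hlam (hlam0 : 0 ≤ lam)
  obtain rfl | hpos := hlam0.eq_or_lt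
  · simp [hg.criticalCurve_zero]
  · refine le_trans ?_ hrε.le
    exact (hg.criticalCurve_le_ofReal_iff hlam0 hr0.le).mpr
      (le_antisymm (hlam hpos) (hg.nonneg _ _ hlam0 hr0.le))

lemma convexOn_mul_toReal_criticalCurve (hg : IsExcessFreeEnergy g) {W : Set ℝ}
    (hW : W ⊆ Ioi 0) (hWc : Convex ℝ W) (hfin : ∀ lam ∈ W, criticalCurve g lam < ⊤) :
    ConvexOn ℝ W (fun lam => lam * (criticalCurve g lam).toReal) := by
  refine ⟨hWc, fun l₁ hl₁ l₂ hl₂ a b ha hb hab => ?_⟩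
  obtain rfl : b = 1 - a := by linarith
  set r := fun lam => (criticalCurve g lam).toReal
  have hzero : ∀ lam ∈ W, g lam (r lam) = 0 := fun lam hlam =>
    (hg.criticalCurve_le_ofReal_iff (hW hlam).le ENNReal.toReal_nonneg).mp
      (ENNReal.ofReal_toReal (hfin lam hlam).ne).ge
  have hL := hWc hl₁ hl₂ ha hb hab
  simp only [smul_eq_mul] at hL ⊢
  set L := a * l₁ + (1 - a) * l₂
  have hLpos : 0 < L := hW hL
  set V := a * (l₁ * r l₁) + (1 - a) * (l₂ * r l₂)
  have hl₁0 : 0 ≤ l₁ := (hW hl₁).le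
  have hl₂0 : 0 ≤ l₂ := (hW hl₂).le
  have hV : 0 ≤ V := by positivity
  have hgL : g L (V / L) = 0 := by
    refine le_antisymm ?_ (hg.nonneg _ _ hLpos.le (by positivity))
    have := hg.convex_comb_le l₁ (r l₁) l₂ (r l₂) a (V / L) hl₁0 ENNReal.toReal_nonneg hl₂0
      ENNReal.toReal_nonneg ha (by linarith) (by positivity) (mul_div_cancel₀ _ hLpos.ne')
    rwa [hzero l₁ hl₁, hzero l₂ hl₂, mul_zero, mul_zero, add_zero] at this
  have hrL : r L ≤ V / L := ENNReal.toReal_le_of_le_ofReal (by positivity)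
    ((hg.criticalCurve_le_ofReal_iff hLpos.le (by positivity)).mpr hgL)
  calc L * r L ≤ L * (V / L) := mul_le_mul_of_nonneg_left hrL hLpos.le
    _ = V := mul_div_cancel₀ _ hLpos.ne'

lemma continuousOn_criticalCurve (hg : IsExcessFreeEnergy g) {S : Set ℝ} (hS : S ⊆ Ici 0)
    (hSc : Convex ℝ S) (hSn : ∀ lam ∈ S, 0 < lam → S ∈ 𝓝 lam)
    (hfin : ∀ lam ∈ S, criticalCurve g lam < ⊤) : ContinuousOn (criticalCurve g) S := by
  intro lam hlam
  obtain rfl | hpos := (show (0 : ℝ) ≤ lam from hS hlam).eq_or_lt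
  · exact hg.continuousWithinAt_criticalCurve_zero.mono hS
  have hW : interior S ∩ Ioi 0 ∈ 𝓝 lam :=
    inter_mem (interior_mem_nhds.mpr (hSn lam hlam hpos)) (Ioi_mem_nhds hpos)
  have hu := (hg.convexOn_mul_toReal_criticalCurve inter_subset_right
    (hSc.interior.inter (convex_Ioi 0)) fun l hl => hfin l (interior_subset hl.1)).continuousOn
    (isOpen_interior.inter isOpen_Ioi)
  have hcont : ContinuousAt (fun l => ENNReal.ofReal (l * (criticalCurve g l).toReal / l)) lam :=
    ENNReal.continuous_ofReal.continuousAt.comp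
      ((hu.continuousAt hW).div continuousAt_id hpos.ne')
  refine (hcont.congr ?_).continuousWithinAt
  filter_upwards [hW] with l hl
  rw [mul_div_cancel_left₀ _ (ne_of_gt hl.2),
    ENNReal.ofReal_toReal (hfin l (interior_subset hl.1)).ne]

lemma criticalCurve_lt_top_of_lt_sSup (hg : IsExcessFreeEnergy g) (hlam : 0 ≤ lam)
    (hlt : lam < sSup {l : ℝ | 0 ≤ l ∧ criticalCurve g l < ⊤}) : criticalCurve g lam < ⊤ := by
  have hne : {l : ℝ | 0 ≤ l ∧ criticalCurve g l < ⊤}.Nonempty :=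
    ⟨0, le_rfl, by simp [hg.criticalCurve_zero]⟩
  obtain ⟨l, ⟨hl, hlfin⟩, hlaml⟩ := exists_lt_of_lt_csSup hne hlt
  exact (hg.monotoneOn_criticalCurve hlam hl hlaml.le).trans_lt hlfin

end IsExcessFreeEnergy

lemma ind_endOK_false (N : ℕ) (ε : ℕ → Bool) : ind (endOK false N ε) = 1 := by
  simp [ind, endOK]

lemma sgn_eq_one_or_eq_neg_one (ε : ℕ → Bool) (n : ℕ) : sgn ε n = 1 ∨ sgn ε n = -1 := by
  unfold sgn; split_ifs <;> simp

lemma pathE_mono {N : ℕ} {f g : (ℕ → Bool) → ℝ} (h : ∀ ε, f ε ≤ g ε) :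
    pathE N f ≤ pathE N g :=
  mul_le_mul_of_nonneg_left (Finset.sum_le_sum fun ε _ => h _) (by positivity)

lemma pathE_pos {N : ℕ} {f : (ℕ → Bool) → ℝ} (h : ∀ ε, 0 < f ε) : 0 < pathE N f :=
  mul_pos (by positivity) (Finset.sum_pos (fun ε _ => h _) Finset.univ_nonempty)

lemma pathE_const (N : ℕ) (c : ℝ) : pathE N (fun _ => c) = c := by
  simp [pathE]

lemma pathE_const_mul (N : ℕ) (c : ℝ) (f : (ℕ → Bool) → ℝ) :
    pathE N (fun ε => c * f ε) = c * pathE N f := by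
  simp only [pathE, ← Finset.mul_sum]; ring

lemma card_mul_le_pathE {N : ℕ} {f : (ℕ → Bool) → ℝ} (hf : ∀ ε, 0 ≤ f ε)
    (s : Finset (Fin N → Bool)) (hs : ∀ ε ∈ s, f (extendPath N ε) = 1) :
    (1 / 2) ^ N * #s ≤ pathE N f := by
  refine mul_le_mul_of_nonneg_left ?_ (by positivity)
  rw [Finset.card_eq_sum_ones, Nat.cast_sum, Nat.cast_one, ← Finset.sum_congr rfl hs]
  exact Finset.sum_le_sum_of_subset_of_nonneg (Finset.subset_univ _) fun _ _ _ => hf _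

lemma integrable_pathE {Ω : Type*} [MeasurableSpace Ω] {μ : Measure Ω} (N : ℕ)
    {f : (ℕ → Bool) → Ω → ℝ} (hf : ∀ ε, Integrable (f ε) μ) :
    Integrable (fun ω => pathE N fun ε => f ε ω) μ :=
  (integrable_finsetSum _ fun _ _ => hf _).const_mul _

lemma integral_pathE {Ω : Type*} [MeasurableSpace Ω] {μ : Measure Ω} (N : ℕ)
    {f : (ℕ → Bool) → Ω → ℝ} (hf : ∀ ε, Integrable (f ε) μ) :
    ∫ ω, (pathE N fun ε => f ε ω) ∂μ = pathE N fun ε => ∫ ω, f ε ω ∂μ := by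
  simp only [pathE]
  rw [integral_const_mul, integral_finsetSum _ fun _ _ => hf _]

/-- `Zpart false λ h N ω = Zlin λ (λ * h) N ω`. The exponent is linear in `(λ, v)`, so
`log Zlin` is convex in `(λ, v)` by Hölder's inequality. -/
noncomputable def Zlin (lam v : ℝ) (N : ℕ) (ω : ℕ → ℝ) : ℝ :=
  pathE N fun ε => Real.exp (-(2 * lam) * ∑ n ∈ lowSet ε N, ω n - 2 * v * #(lowSet ε N))

lemma sum_mul_sgn (ε : ℕ → Bool) (N : ℕ) (x : ℕ → ℝ) :
    ∑ n ∈ Icc 1 N, x n * (sgn ε n : ℝ) = ∑ n ∈ Icc 1 N, x n - 2 * ∑ n ∈ lowSet ε N, x n := by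
  rw [lowSet, Finset.sum_filter, Finset.mul_sum, ← Finset.sum_sub_distrib]
  refine Finset.sum_congr rfl fun n _ => ?_
  rcases sgn_eq_one_or_eq_neg_one ε n with h | h <;> simp [h]; ring

lemma Ztilde_false_eq (lam h : ℝ) (N : ℕ) (ω : ℕ → ℝ) :
    Ztilde false lam h N ω
      = Real.exp (lam * (∑ n ∈ Icc 1 N, ω n + N * h)) * Zlin lam (lam * h) N ω := by
  rw [Ztilde, Zlin, ← pathE_const_mul]
  congr 1
  funext ε
  rw [ind_endOK_false, mul_one, ← Real.exp_add, sum_mul_sgn, Finset.sum_add_distrib,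
    Finset.sum_add_distrib]
  simp only [Finset.sum_const, Nat.card_Icc, nsmul_eq_mul]
  push_cast
  ring_nf

lemma Zlin_pos (lam v : ℝ) (N : ℕ) (ω : ℕ → ℝ) : 0 < Zlin lam v N ω :=
  pathE_pos fun _ => Real.exp_pos _

lemma Zlin_zero_zero (N : ℕ) (ω : ℕ → ℝ) : Zlin 0 0 N ω = 1 := by
  simp [Zlin, pathE_const]

lemma Zlin_eq_pathE (lam v : ℝ) (N : ℕ) (ω : ℕ → ℝ) :
    Zlin lam v N ω = pathE N fun ε =>
      Real.exp (-(2 * v) * #(lowSet ε N)) * Real.exp (-(2 * lam) * ∑ n ∈ lowSet ε N, ω n) := by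
  simp only [Zlin, ← Real.exp_add]
  ring_nf

lemma Zlin_anti {lam v v' : ℝ} (hv : v ≤ v') (N : ℕ) (ω : ℕ → ℝ) :
    Zlin lam v' N ω ≤ Zlin lam v N ω :=
  pathE_mono fun ε => Real.exp_le_exp.mpr <| by
    have : (0 : ℝ) ≤ #(lowSet ε N) := by positivity
    nlinarith

lemma card_lowSet_le (ε : ℕ → Bool) (N : ℕ) : #(lowSet ε N) ≤ N :=
  (Finset.card_filter_le _ _).trans (by simp)

lemma Zlin_le_exp_mul (lam v v' : ℝ) (N : ℕ) (ω : ℕ → ℝ) :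
    Zlin lam v N ω ≤ Real.exp (2 * N * |v' - v|) * Zlin lam v' N ω := by
  rw [Zlin, Zlin, ← pathE_const_mul]
  refine pathE_mono fun ε => ?_
  rw [← Real.exp_add, Real.exp_le_exp]
  have hN : (#(lowSet ε N) : ℝ) ≤ N := by exact_mod_cast card_lowSet_le ε N
  have : (v' - v) * #(lowSet ε N) ≤ |v' - v| * N :=
    (mul_le_mul_of_nonneg_right (le_abs_self _) (by positivity)).trans
      (mul_le_mul_of_nonneg_left hN (abs_nonneg _))
  linarith

lemma sum_exp_convex_comb_le {ι : Type*} (s : Finset ι) (x y : ι → ℝ) {t : ℝ} (ht₀ : 0 ≤ t)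
    (ht₁ : t ≤ 1) :
    ∑ i ∈ s, Real.exp (t * x i + (1 - t) * y i)
      ≤ (∑ i ∈ s, Real.exp (x i)) ^ t * (∑ i ∈ s, Real.exp (y i)) ^ (1 - t) := by
  rcases s.eq_empty_or_nonempty with rfl | hs
  · simp only [Finset.sum_empty]; positivity
  set A := ∑ i ∈ s, Real.exp (x i)
  set B := ∑ i ∈ s, Real.exp (y i)
  have hA : 0 < A := Finset.sum_pos (fun i _ => Real.exp_pos _) hs
  have hB : 0 < B := Finset.sum_pos (fun i _ => Real.exp_pos _) hs
  have amgm : ∀ i ∈ s, Real.exp (t * x i + (1 - t) * y i)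
      ≤ A ^ t * B ^ (1 - t) * (t * (Real.exp (x i) / A) + (1 - t) * (Real.exp (y i) / B)) := by
    intro i _
    have hsplit : Real.exp (t * x i + (1 - t) * y i)
        = A ^ t * B ^ (1 - t) * ((Real.exp (x i) / A) ^ t * (Real.exp (y i) / B) ^ (1 - t)) := by
      rw [Real.div_rpow (Real.exp_pos _).le hA.le, Real.div_rpow (Real.exp_pos _).le hB.le,
        ← Real.exp_mul, ← Real.exp_mul, Real.exp_add]
      field_simp
    rw [hsplit]
    exact mul_le_mul_of_nonneg_left (Real.geom_mean_le_arith_mean2_weighted ht₀ (by linarith)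
      (by positivity) (by positivity) (by ring)) (by positivity)
  calc _ ≤ ∑ i ∈ s, A ^ t * B ^ (1 - t)
          * (t * (Real.exp (x i) / A) + (1 - t) * (Real.exp (y i) / B)) := Finset.sum_le_sum amgm
    _ = A ^ t * B ^ (1 - t) * (t * (A / A) + (1 - t) * (B / B)) := by
      rw [← Finset.mul_sum, Finset.sum_add_distrib, ← Finset.mul_sum, ← Finset.mul_sum,
        ← Finset.sum_div, ← Finset.sum_div]
    _ = A ^ t * B ^ (1 - t) := by rw [div_self hA.ne', div_self hB.ne']; ring

lemma pathE_exp_convex_comb_le (N : ℕ) (a b : (ℕ → Bool) → ℝ) {t : ℝ} (ht₀ : 0 ≤ t)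
    (ht₁ : t ≤ 1) :
    pathE N (fun ε => Real.exp (t * a ε + (1 - t) * b ε))
      ≤ pathE N (fun ε => Real.exp (a ε)) ^ t * pathE N (fun ε => Real.exp (b ε)) ^ (1 - t) := by
  have hc : (0 : ℝ) < (1 / 2) ^ N := by positivity
  simp only [pathE]
  rw [Real.mul_rpow hc.le (by positivity), Real.mul_rpow hc.le (by positivity),
    mul_mul_mul_comm, ← Real.rpow_add hc, add_sub_cancel, Real.rpow_one]
  exact mul_le_mul_of_nonneg_left (sum_exp_convex_comb_le _ _ _ ht₀ ht₁) hc.le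

lemma Zlin_convex_comb_le (l₁ v₁ l₂ v₂ : ℝ) (N : ℕ) (ω : ℕ → ℝ) {t : ℝ} (ht₀ : 0 ≤ t)
    (ht₁ : t ≤ 1) :
    Zlin (t * l₁ + (1 - t) * l₂) (t * v₁ + (1 - t) * v₂) N ω
      ≤ Zlin l₁ v₁ N ω ^ t * Zlin l₂ v₂ N ω ^ (1 - t) := by
  refine le_of_eq_of_le ?_ (pathE_exp_convex_comb_le N _ _ ht₀ ht₁)
  simp only [Zlin]
  congr 1
  funext ε
  ring_nf

section Dyck

open DyckStep

lemma walkPos_succ (ε : ℕ → Bool) (n : ℕ) :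
    walkPos ε (n + 1) = walkPos ε n + (if ε n then 1 else -1) :=
  Finset.sum_range_succ _ _

lemma lowSet_eq_empty_of_nonneg {ε : ℕ → Bool} {N : ℕ} (hnn : ∀ n ≤ N, 0 ≤ walkPos ε n) :
    lowSet ε N = ∅ := by
  refine Finset.filter_eq_empty_iff.mpr fun n hn => ?_
  obtain ⟨hn1, hnN⟩ := Finset.mem_Icc.mp hn
  obtain ⟨m, rfl⟩ : ∃ m, n = m + 1 := ⟨n - 1, by omega⟩
  have hm := hnn m (by omega)
  have hm1 := hnn (m + 1) hnN
  have hstep := walkPos_succ ε m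
  have : sgn ε (m + 1) = 1 := by
    simp only [sgn, Nat.add_sub_cancel]
    split_ifs at hstep <;> omega
  simp [this]

/-- The walk whose first `2 * p.semilength` steps are those of the Dyck word `p`
(`U` is a step up), followed by down steps. -/
def dyckSteps (p : DyckWord) : ℕ → Bool := fun j => decide (p.toList.getD j D = U)

lemma walkPos_dyckSteps (p : DyckWord) {n : ℕ} (hn : n ≤ p.toList.length) :
    walkPos (dyckSteps p) n = ((p.toList.take n).count U : ℤ) - (p.toList.take n).count D := by
  induction n with
  | zero => simp [walkPos]
  | succ m ih =>
    have hm : m < p.toList.length := by omega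
    rw [walkPos_succ, ih (by omega), List.take_add_one, List.getElem?_eq_getElem hm]
    simp only [dyckSteps, List.getD_eq_getElem _ _ hm, Option.toList_some, List.count_append,
      List.count_singleton]
    rcases p.toList[m].dichotomy with h | h <;> simp [h] <;> omega

lemma extendPath_dyckSteps (p : DyckWord) :
    extendPath (2 * p.semilength) (fun i => dyckSteps p i) = dyckSteps p := by
  funext j
  unfold extendPath
  split_ifs with hj
  · rfl
  · rw [dyckSteps, List.getD_eq_default _ _ (by rw [← p.two_mul_semilength_eq_length]; omega)]
    rfl

lemma lowSet_extendPath_dyckSteps {k : ℕ} (p : DyckWord) (hp : p.semilength = k) :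
    lowSet (extendPath (2 * k) fun i => dyckSteps p i) (2 * k) = ∅ := by
  subst hp
  rw [extendPath_dyckSteps]
  refine lowSet_eq_empty_of_nonneg fun n hn => ?_
  rw [walkPos_dyckSteps p (by rwa [← p.two_mul_semilength_eq_length])]
  have := p.count_D_le_count_U n
  omega

lemma catalan_le_card_lowSet_eq_empty (k : ℕ) :
    catalan k ≤ #{ε : Fin (2 * k) → Bool | lowSet (extendPath (2 * k) ε) (2 * k) = ∅} := by
  rw [← DyckWord.card_dyckWord_semilength_eq_catalan, ← Fintype.card_subtype]
  refine Fintype.card_le_of_injective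
    (fun p => ⟨fun i => dyckSteps p.1 i, lowSet_extendPath_dyckSteps p.1 p.2⟩) ?_
  rintro ⟨p, rfl⟩ ⟨q, hq⟩ hpq
  have hlen : p.toList.length = q.toList.length := by
    rw [← p.two_mul_semilength_eq_length, ← q.two_mul_semilength_eq_length, hq]
  refine Subtype.ext (DyckWord.ext (List.ext_getElem hlen fun i hp hq => ?_))
  have := congrFun (congrArg Subtype.val hpq) ⟨i, by rwa [← p.two_mul_semilength_eq_length] at hp⟩
  simp only [dyckSteps, List.getD_eq_getElem _ _ hp, List.getD_eq_getElem _ _ hq,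
    decide_eq_decide] at this
  rcases p.toList[i].dichotomy with h | h <;> rcases q.toList[i].dichotomy with h' | h' <;>
    simp_all

end Dyck

lemma four_pow_le_sq_mul_catalan {k : ℕ} (hk : 0 < k) : 4 ^ k ≤ (2 * k) ^ 2 * catalan k := by
  have hcb : k.centralBinom = (k + 1) * catalan k := by
    rw [catalan_eq_centralBinom_div, Nat.mul_div_cancel' k.succ_dvd_centralBinom]
  calc 4 ^ k ≤ 2 * k * ((k + 1) * catalan k) :=
        hcb ▸ Nat.four_pow_le_two_mul_self_mul_centralBinom k hk
    _ ≤ 2 * k * (2 * k * catalan k) := by gcongr; omega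
    _ = (2 * k) ^ 2 * catalan k := by ring

lemma one_div_sq_le_Zlin (lam v : ℝ) {k : ℕ} (hk : 0 < k) (ω : ℕ → ℝ) :
    1 / (2 * k : ℝ) ^ 2 ≤ Zlin lam v (2 * k) ω := by
  have hcat : (4 : ℝ) ^ k ≤ (2 * k) ^ 2 * catalan k := mod_cast four_pow_le_sq_mul_catalan hk
  calc 1 / (2 * k : ℝ) ^ 2 = (1 / 2) ^ (2 * k) * (4 ^ k / (2 * k) ^ 2) := by
        rw [pow_mul, ← mul_div_assoc, ← mul_pow]; norm_num
    _ ≤ (1 / 2) ^ (2 * k) *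
          (#{ε : Fin (2 * k) → Bool | lowSet (extendPath (2 * k) ε) (2 * k) = ∅} : ℝ) := by
        gcongr
        rw [div_le_iff₀ (by positivity), mul_comm]
        exact hcat.trans (by gcongr; exact_mod_cast catalan_le_card_lowSet_eq_empty k)
    _ ≤ Zlin lam v (2 * k) ω := card_mul_le_pathE (fun _ => (Real.exp_pos _).le) _
        fun ε hε => by simp [(Finset.mem_filter.mp hε).2]

noncomputable def logZlin (lam v : ℝ) (k : ℕ) (ω : ℕ → ℝ) : ℝ :=
  Real.log (Zlin lam v (2 * k) ω) / (2 * k)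

lemma logZlin_anti {lam v v' : ℝ} (hv : v ≤ v') (k : ℕ) (ω : ℕ → ℝ) :
    logZlin lam v' k ω ≤ logZlin lam v k ω :=
  div_le_div_of_nonneg_right (Real.log_le_log (Zlin_pos _ _ _ _) (Zlin_anti hv _ ω))
    (by positivity)

lemma logZlin_le_add (lam v v' : ℝ) (k : ℕ) (ω : ℕ → ℝ) :
    logZlin lam v k ω ≤ logZlin lam v' k ω + 2 * |v' - v| := by
  have hZ := Real.log_le_log (Zlin_pos _ _ _ _) (Zlin_le_exp_mul lam v v' (2 * k) ω)
  rw [Real.log_mul (Real.exp_pos _).ne' (Zlin_pos _ _ _ _).ne', Real.log_exp] at hZ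
  rcases k.eq_zero_or_pos with rfl | hk
  · simp [logZlin]
  · rw [logZlin, logZlin, div_add' _ _ _ (by positivity)]
    exact div_le_div_of_nonneg_right (by push_cast at hZ ⊢; linarith) (by positivity)

lemma convexOn_logZlin (k : ℕ) (ω : ℕ → ℝ) :
    ConvexOn ℝ Set.univ fun p : ℝ × ℝ => logZlin p.1 p.2 k ω := by
  refine ⟨convex_univ, fun p _ q _ a b ha hb hab => ?_⟩
  obtain rfl : b = 1 - a := by linarith
  have hZ := Real.log_le_log (Zlin_pos _ _ _ _)
    (Zlin_convex_comb_le p.1 p.2 q.1 q.2 (2 * k) ω ha (by linarith))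
  rw [Real.log_mul (Real.rpow_pos_of_pos (Zlin_pos _ _ _ _) _).ne'
    (Real.rpow_pos_of_pos (Zlin_pos _ _ _ _) _).ne', Real.log_rpow (Zlin_pos _ _ _ _),
    Real.log_rpow (Zlin_pos _ _ _ _)] at hZ
  simp only [logZlin, Prod.fst_add, Prod.snd_add, Prod.smul_fst, Prod.smul_snd, smul_eq_mul]
  rw [mul_div_assoc', mul_div_assoc', ← add_div]
  exact div_le_div_of_nonneg_right hZ (by positivity)

lemma logZlin_zero_zero (k : ℕ) (ω : ℕ → ℝ) : logZlin 0 0 k ω = 0 := by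
  simp [logZlin, Zlin_zero_zero]

lemma neg_two_mul_log_div_le_logZlin (lam v : ℝ) {k : ℕ} (hk : 0 < k) (ω : ℕ → ℝ) :
    -2 * (Real.log (2 * k) / (2 * k)) ≤ logZlin lam v k ω := by
  have hZ := Real.log_le_log (by positivity) (one_div_sq_le_Zlin lam v hk ω)
  rw [one_div, Real.log_inv, Real.log_pow] at hZ
  rw [logZlin, mul_div_assoc', neg_mul]
  exact div_le_div_of_nonneg_right (by push_cast at hZ; linarith) (by positivity)

section Limits

variable {Ω : Type*} [MeasurableSpace Ω] {μ : Measure Ω}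

lemma le_of_ae_tendsto [NeZero μ] {u v : ℕ → Ω → ℝ} {a b : ℝ}
    (hu : ∀ᵐ ω ∂μ, Tendsto (u · ω) atTop (𝓝 a)) (hv : ∀ᵐ ω ∂μ, Tendsto (v · ω) atTop (𝓝 b))
    (huv : ∀ ω, ∀ᶠ k in atTop, u k ω ≤ v k ω) : a ≤ b := by
  obtain ⟨ω, hua, hvb⟩ := (hu.and hv).exists
  exact le_of_tendsto_of_tendsto hua hvb (huv ω)

lemma nonpos_of_ae_tendsto_log_div [IsProbabilityMeasure μ] {Z : ℕ → Ω → ℝ} {a : ℝ}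
    (hZ : ∀ k ω, 0 < Z k ω) (hint : ∀ k, Integrable (Z k) μ) (hle : ∀ k, ∫ ω, Z k ω ∂μ ≤ 1)
    (hlim : ∀ᵐ ω ∂μ, Tendsto (fun k : ℕ => Real.log (Z k ω) / k) atTop (𝓝 a)) : a ≤ 0 := by
  by_contra! ha
  obtain ⟨δ, hδ, hδa⟩ : ∃ δ, 0 < δ ∧ δ < a := ⟨a / 2, by linarith, by linarith⟩
  have hmarkov (k : ℕ) :
      μ {ω | Real.exp (δ * k) ≤ Z k ω} ≤ ENNReal.ofReal (Real.exp (k * -δ)) := by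
    have := mul_meas_ge_le_integral_of_nonneg (Eventually.of_forall fun ω => (hZ k ω).le)
      (hint k) (Real.exp (δ * k))
    rw [ENNReal.le_ofReal_iff_toReal_le (measure_ne_top _ _) (Real.exp_pos _).le,
      ← measureReal_def, mul_neg, Real.exp_neg, ← one_div, le_div_iff₀ (Real.exp_pos _),
      mul_comm (k : ℝ), mul_comm]
    exact this.trans (hle k)
  have hsum : ∑' k : ℕ, μ {ω | Real.exp (δ * k) ≤ Z k ω} ≠ ⊤ := by
    refine ne_top_of_le_ne_top ?_ (ENNReal.tsum_le_tsum hmarkov)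
    rw [← ENNReal.ofReal_tsum_of_nonneg (fun k => (Real.exp_pos _).le)
      (Real.summable_exp_nat_mul_iff.mpr (by linarith))]
    exact ENNReal.ofReal_ne_top
  obtain ⟨ω, hrare, hω⟩ := ((ae_eventually_notMem hsum).and hlim).exists
  obtain ⟨k, hk, hδk, hk0⟩ := (hrare.and ((hω.eventually (lt_mem_nhds hδa)).and
    (eventually_gt_atTop 0))).exists
  rw [lt_div_iff₀ (by positivity)] at hδk
  exact hk ((Real.exp_le_exp.mpr hδk.le).trans_eq (Real.exp_log (hZ k ω)))

end Limits

lemma tendsto_neg_two_mul : Tendsto (fun lam : ℝ => -(2 * lam)) (𝓝 0) (𝓝 0) :=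
  (by fun_prop : Continuous fun lam : ℝ => -(2 * lam)).tendsto' 0 0 (by simp)

def IsQuenchedFreeEnergy (P : Measure (ℕ → ℝ)) (F : ℝ → ℝ → ℝ) : Prop :=
  ∀ lam h : ℝ, 0 ≤ lam → 0 ≤ h →
    ∀ᵐ ω ∂P, Tendsto (fun k : ℕ => Real.log (Ztilde false lam h (2 * k) ω) / (2 * k))
      atTop (nhds (F lam h))

namespace BasicSetup

variable {mu : Measure ℝ} {P : Measure (ℕ → ℝ)} {F : ℝ → ℝ → ℝ}

lemma isProbabilityMeasure (hsetup : BasicSetup mu P) : IsProbabilityMeasure P := hsetup.2.1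

lemma map_neg_eq (hsetup : BasicSetup mu P) : mu.map (fun x => -x) = mu := hsetup.2.2.1

lemma map_coord_eq (hsetup : BasicSetup mu P) (n : ℕ) : P.map (fun ω => ω n) = mu :=
  hsetup.2.2.2.2.2.1 n

lemma iIndepFun_coord (hsetup : BasicSetup mu P) : iIndepFun (fun n (ω : ℕ → ℝ) => ω n) P :=
  hsetup.2.2.2.2.2.2

lemma zero_mem_interior_integrableExpSet (hsetup : BasicSetup mu P) :
    0 ∈ interior (integrableExpSet id mu) := by
  obtain ⟨-, -, -, -, ⟨t₀, ht₀, hexp⟩, -, -⟩ := hsetup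
  exact mem_interior.mpr ⟨Set.Ioo (-t₀) t₀, fun t ht => hexp t (abs_le.mpr ⟨ht.1.le, ht.2.le⟩),
    isOpen_Ioo, by simpa using ht₀⟩

lemma integral_id_eq_zero (hsetup : BasicSetup mu P) : ∫ x, x ∂mu = 0 := by
  have hneg : ∫ x, x ∂(mu.map fun y => -y) = ∫ x, -x ∂mu :=
    integral_map measurable_neg.aemeasurable aestronglyMeasurable_id
  rw [hsetup.map_neg_eq, integral_neg] at hneg
  linarith

lemma identDistrib_coord (hsetup : BasicSetup mu P) (n : ℕ) :
    IdentDistrib (fun ω : ℕ → ℝ => ω n) id P mu :=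
  ⟨(measurable_pi_apply n).aemeasurable, aemeasurable_id,
    by rw [hsetup.map_coord_eq n, Measure.map_id]⟩

lemma ae_tendsto_sum_div (hsetup : BasicSetup mu P) :
    ∀ᵐ ω ∂P, Tendsto (fun N : ℕ => (∑ n ∈ Icc 1 N, ω n) / (N : ℝ)) atTop (𝓝 0) := by
  have hident := fun n =>
    (hsetup.identDistrib_coord (n + 1)).trans (hsetup.identDistrib_coord 1).symm
  have hslln := strong_law_ae_real (μ := P) (fun i ω => ω (i + 1))
    ((hsetup.identDistrib_coord 1).integrable_iff.mpr
      (integrable_of_mem_interior_integrableExpSet hsetup.zero_mem_interior_integrableExpSet))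
    (fun i j hij => hsetup.iIndepFun_coord.indepFun (by simpa using hij)) hident
  rw [(hsetup.identDistrib_coord 1).integral_eq] at hslln
  simp only [id_eq, hsetup.integral_id_eq_zero] at hslln
  filter_upwards [hslln] with ω hω
  refine hω.congr fun N => ?_
  rw [← Finset.Ico_add_one_right_eq_Icc, Finset.sum_Ico_eq_sum_range, add_tsub_cancel_right]
  simp only [add_comm 1]

lemma mgf_sum_coord (hsetup : BasicSetup mu P) (A : Finset ℕ) (t : ℝ) :
    mgf (fun ω => ∑ n ∈ A, ω n) P t = mgf id mu t ^ #A := by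
  have := hsetup.iIndepFun_coord.mgf_sum (t := t) (fun n => measurable_pi_apply n) A
  rw [Finset.sum_fn] at this
  rw [this, Finset.prod_eq_pow_card fun n _ =>
    mgf_congr_of_identDistrib _ _ (hsetup.identDistrib_coord n) t]

lemma integrable_exp_mul_sum_coord (hsetup : BasicSetup mu P) (A : Finset ℕ) {t : ℝ}
    (ht : t ∈ integrableExpSet id mu) :
    Integrable (fun ω => Real.exp (t * ∑ n ∈ A, ω n)) P := by
  have := hsetup.isProbabilityMeasure
  have := hsetup.iIndepFun_coord.integrable_exp_mul_sum (t := t) (s := A) measurable_pi_apply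
    fun n _ =>
      ((hsetup.identDistrib_coord n).comp (measurable_const_mul t).exp).integrable_iff.mpr ht
  simpa [Finset.sum_fn] using this

lemma integral_Zlin_le_one (hsetup : BasicSetup mu P) {lam h : ℝ} (N : ℕ)
    (hint : -(2 * lam) ∈ integrableExpSet id mu)
    (hmgf : mgf id mu (-(2 * lam)) ≤ Real.exp (2 * lam * h)) :
    Integrable (Zlin lam (lam * h) N) P ∧ ∫ ω, Zlin lam (lam * h) N ω ∂P ≤ 1 := by
  have hterm := fun ε : ℕ → Bool =>
    (hsetup.integrable_exp_mul_sum_coord (lowSet ε N) hint).const_mul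
      (Real.exp (-(2 * (lam * h)) * #(lowSet ε N)))
  simp only [funext (Zlin_eq_pathE lam (lam * h) N)]
  refine ⟨integrable_pathE N hterm, ?_⟩
  rw [integral_pathE N hterm, ← pathE_const N 1]
  refine pathE_mono fun ε => ?_
  rw [integral_const_mul, ← mgf, hsetup.mgf_sum_coord, mul_comm _ (#(lowSet ε N) : ℝ),
    Real.exp_nat_mul, ← mul_pow]
  have hM : Real.exp (-(2 * (lam * h))) * mgf id mu (-(2 * lam)) ≤ 1 := by
    calc _ ≤ Real.exp (-(2 * (lam * h))) * Real.exp (2 * lam * h) := by gcongr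
      _ = 1 := by rw [← Real.exp_add]; ring_nf; exact Real.exp_zero
  exact pow_le_one₀ (mul_nonneg (Real.exp_pos _).le (mgf_nonneg)) hM

lemma eventually_mgf_le (hsetup : BasicSetup mu P) {ε : ℝ} (hε : 0 < ε) :
    ∀ᶠ lam in 𝓝[>] 0, mgf id mu (-(2 * lam)) ≤ Real.exp (2 * lam * ε) := by
  have : IsProbabilityMeasure mu := hsetup.1
  have hderiv : HasDerivAt (mgf id mu) 0 0 := by
    simpa [hsetup.integral_id_eq_zero] using
      hasDerivAt_mgf hsetup.zero_mem_interior_integrableExpSet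
  have hmap : Tendsto (fun lam : ℝ => -(2 * lam)) (𝓝[>] 0) (𝓝[≠] 0) := by
    refine tendsto_nhdsWithin_iff.mpr ⟨?_, ?_⟩
    · exact tendsto_nhdsWithin_of_tendsto_nhds tendsto_neg_two_mul
    · filter_upwards [self_mem_nhdsWithin] with lam (hlam : 0 < lam)
      simpa using hlam.ne'
  filter_upwards [((hasDerivAt_iff_tendsto_slope.mp hderiv).comp hmap).eventually
    (lt_mem_nhds (neg_lt_zero.mpr hε)), self_mem_nhdsWithin] with lam hslope (hlam : 0 < lam)
  rw [Function.comp_apply, slope_def_field, mgf_zero, sub_zero, lt_div_iff_of_neg (by linarith)]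
    at hslope
  linarith [Real.add_one_le_exp (2 * lam * ε)]

lemma ae_tendsto_logZlin (hsetup : BasicSetup mu P) (hF : IsQuenchedFreeEnergy P F) {lam h : ℝ}
    (hlam : 0 ≤ lam) (hh : 0 ≤ h) :
    ∀ᵐ ω ∂P, Tendsto (fun k => logZlin lam (lam * h) k ω) atTop (𝓝 (F lam h - lam * h)) := by
  filter_upwards [hF lam h hlam hh, hsetup.ae_tendsto_sum_div] with ω hZ hsum
  have heven : Tendsto (fun k : ℕ => 2 * k) atTop atTop := tendsto_id.const_mul_atTop' two_pos
  have := (hZ.sub ((hsum.comp heven).const_mul lam)).sub_const (lam * h)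
  rw [mul_zero, sub_zero] at this
  refine this.congr' ?_
  filter_upwards [eventually_gt_atTop 0] with k hk
  rw [Function.comp_apply, Ztilde_false_eq,
    Real.log_mul (Real.exp_pos _).ne' (Zlin_pos _ _ _ _).ne', Real.log_exp, logZlin]
  field_simp
  push_cast
  ring

lemma excess_nonneg (hsetup : BasicSetup mu P) (hF : IsQuenchedFreeEnergy P F) {lam h : ℝ}
    (hlam : 0 ≤ lam) (hh : 0 ≤ h) : 0 ≤ F lam h - lam * h := by
  have := hsetup.isProbabilityMeasure
  have hlower : Tendsto (fun k : ℕ => -2 * (Real.log (2 * k) / (2 * k))) atTop (𝓝 0) := by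
    have := (Real.tendsto_pow_log_div_mul_add_atTop 1 0 1 one_ne_zero).comp
      (tendsto_natCast_atTop_atTop.const_mul_atTop two_pos)
    simpa using this.const_mul (-2)
  exact le_of_ae_tendsto (Eventually.of_forall fun _ => hlower)
    (hsetup.ae_tendsto_logZlin hF hlam hh)
    fun ω => (eventually_gt_atTop 0).mono fun k hk => neg_two_mul_log_div_le_logZlin _ _ hk ω

lemma excess_antitoneOn (hsetup : BasicSetup mu P) (hF : IsQuenchedFreeEnergy P F) {lam : ℝ}
    (hlam : 0 ≤ lam) : AntitoneOn (fun h => F lam h - lam * h) (Set.Ici 0) := by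
  have := hsetup.isProbabilityMeasure
  intro h (hh : 0 ≤ h) h' (hh' : 0 ≤ h') hhh
  exact le_of_ae_tendsto (hsetup.ae_tendsto_logZlin hF hlam hh')
    (hsetup.ae_tendsto_logZlin hF hlam hh)
    fun ω => Eventually.of_forall fun k => logZlin_anti (by gcongr) k ω

lemma excess_le_add_mul_sub (hsetup : BasicSetup mu P) (hF : IsQuenchedFreeEnergy P F)
    {lam h h' : ℝ} (hlam : 0 ≤ lam) (hh : 0 ≤ h) (hhh : h ≤ h') :
    F lam h - lam * h ≤ F lam h' - lam * h' + 2 * lam * (h' - h) := by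
  have := hsetup.isProbabilityMeasure
  have habs : 2 * |lam * h' - lam * h| = 2 * lam * (h' - h) := by
    rw [← mul_sub, abs_of_nonneg (mul_nonneg hlam (by linarith)), mul_assoc]
  refine le_of_ae_tendsto (hsetup.ae_tendsto_logZlin hF hlam hh) ?_
    fun ω => Eventually.of_forall fun k => logZlin_le_add lam (lam * h) (lam * h') k ω
  filter_upwards [hsetup.ae_tendsto_logZlin hF hlam (hh.trans hhh)] with ω hω
  rw [← habs]
  exact hω.add_const _

lemma excess_zero (hsetup : BasicSetup mu P) (hF : IsQuenchedFreeEnergy P F) {h : ℝ}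
    (hh : 0 ≤ h) : F 0 h - 0 * h = 0 := by
  have := hsetup.isProbabilityMeasure
  obtain ⟨ω, hω⟩ := (hsetup.ae_tendsto_logZlin hF le_rfl hh).exists
  refine tendsto_nhds_unique hω ?_
  simp only [zero_mul, logZlin_zero_zero, tendsto_const_nhds]

lemma excess_convex_comb_le (hsetup : BasicSetup mu P) (hF : IsQuenchedFreeEnergy P F)
    {l₁ h₁ l₂ h₂ t H : ℝ} (hl₁ : 0 ≤ l₁) (hh₁ : 0 ≤ h₁) (hl₂ : 0 ≤ l₂) (hh₂ : 0 ≤ h₂)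
    (ht₀ : 0 ≤ t) (ht₁ : t ≤ 1) (hH : 0 ≤ H)
    (hLH : (t * l₁ + (1 - t) * l₂) * H = t * (l₁ * h₁) + (1 - t) * (l₂ * h₂)) :
    F (t * l₁ + (1 - t) * l₂) H - (t * l₁ + (1 - t) * l₂) * H
      ≤ t * (F l₁ h₁ - l₁ * h₁) + (1 - t) * (F l₂ h₂ - l₂ * h₂) := by
  have := hsetup.isProbabilityMeasure
  refine le_of_ae_tendsto (hsetup.ae_tendsto_logZlin hF (by positivity) hH)
    (v := fun k ω => t * logZlin l₁ (l₁ * h₁) k ω + (1 - t) * logZlin l₂ (l₂ * h₂) k ω) ?_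
    fun ω => Eventually.of_forall fun k => ?_
  · filter_upwards [hsetup.ae_tendsto_logZlin hF hl₁ hh₁, hsetup.ae_tendsto_logZlin hF hl₂ hh₂]
      with ω hω₁ hω₂
    exact (hω₁.const_mul t).add (hω₂.const_mul (1 - t))
  · have := (convexOn_logZlin k ω).2 (Set.mem_univ (l₁, l₁ * h₁)) (Set.mem_univ (l₂, l₂ * h₂))
      ht₀ (sub_nonneg.mpr ht₁) (add_sub_cancel t 1)
    simpa only [Prod.smul_mk, Prod.mk_add_mk, smul_eq_mul, ← hLH] using this

lemma eventually_excess_nonpos (hsetup : BasicSetup mu P) (hF : IsQuenchedFreeEnergy P F)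
    {ε : ℝ} (hε : 0 < ε) : ∀ᶠ lam in 𝓝[>] 0, F lam ε - lam * ε ≤ 0 := by
  have := hsetup.isProbabilityMeasure
  have hexp : ∀ᶠ lam in 𝓝[>] 0, -(2 * lam) ∈ integrableExpSet id mu :=
    nhdsWithin_le_nhds (tendsto_neg_two_mul.eventually
      (mem_interior_iff_mem_nhds.mp hsetup.zero_mem_interior_integrableExpSet))
  filter_upwards [hexp, hsetup.eventually_mgf_le hε, self_mem_nhdsWithin]
    with lam hint hmgf (hlam : 0 < lam)
  have hZ (k : ℕ) := hsetup.integral_Zlin_le_one (2 * k) hint hmgf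
  have := nonpos_of_ae_tendsto_log_div (fun k => Zlin_pos lam (lam * ε) (2 * k)) (fun k => (hZ k).1)
    (fun k => (hZ k).2) (a := 2 * (F lam ε - lam * ε)) ?_
  · linarith
  filter_upwards [hsetup.ae_tendsto_logZlin hF hlam.le hε.le] with ω hω
  refine (hω.const_mul 2).congr fun k => ?_
  rw [logZlin]
  rcases k.eq_zero_or_pos with rfl | hk
  · simp
  · field_simp

theorem isExcessFreeEnergy (hsetup : BasicSetup mu P) (hF : IsQuenchedFreeEnergy P F) :
    IsExcessFreeEnergy fun lam h => F lam h - lam * h where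
  nonneg _ _ hlam hh := hsetup.excess_nonneg hF hlam hh
  antitoneOn _ hlam := hsetup.excess_antitoneOn hF hlam
  le_add_mul_sub _ _ _ hlam hh hhh := hsetup.excess_le_add_mul_sub hF hlam hh hhh
  zero_lam _ hh := hsetup.excess_zero hF hh
  convex_comb_le _ _ _ _ _ _ hl₁ hh₁ hl₂ hh₂ ht₀ ht₁ hH hLH :=
    hsetup.excess_convex_comb_le hF hl₁ hh₁ hl₂ hh₂ ht₀ ht₁ hH hLH
  eventually_nonpos _ hε := hsetup.eventually_excess_nonpos hF hε

end BasicSetup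

/-- Theorem 1: structure of the phase diagram.
There is an increasing function `h_c : [0,∞) → [0,∞]` such that the localized region
`{f(λ,h) > λh}` is `{h < h_c(λ)}` and the delocalized region `{f(λ,h) = λh}` is
`{h ≥ h_c(λ)}`; `h_c` is continuous on `[0,∞)` if everywhere finite, and otherwise on
`[0, sup{λ : h_c(λ) < ∞})`. Here `F λ h` is the (non-random) quenched free energy. -/
theorem phase_diagram_structure
    (mu : Measure ℝ) (P : Measure (ℕ → ℝ)) (hsetup : BasicSetup mu P)
    (F : ℝ → ℝ → ℝ)
    (hF : ∀ lam h : ℝ, 0 ≤ lam → 0 ≤ h →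
      ∀ᵐ ω ∂P, Tendsto (fun k : ℕ => Real.log (Ztilde false lam h (2 * k) ω) / (2 * k))
        atTop (nhds (F lam h))) :
    ∃ hc : ℝ → ℝ≥0∞,
      MonotoneOn hc (Set.Ici 0) ∧
      (∀ lam ≥ (0 : ℝ), ∀ h ≥ (0 : ℝ),
        (lam * h < F lam h ↔ ENNReal.ofReal h < hc lam)) ∧
      (∀ lam ≥ (0 : ℝ), ∀ h ≥ (0 : ℝ),
        (F lam h = lam * h ↔ hc lam ≤ ENNReal.ofReal h)) ∧
      ((∀ lam ≥ (0 : ℝ), hc lam < ⊤) → ContinuousOn hc (Set.Ici 0)) ∧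
      (¬ (∀ lam ≥ (0 : ℝ), hc lam < ⊤) →
        ContinuousOn hc (Set.Ico 0 (sSup {lam : ℝ | 0 ≤ lam ∧ hc lam < ⊤}))) := by
  have hg := hsetup.isExcessFreeEnergy hF
  refine ⟨criticalCurve _, hg.monotoneOn_criticalCurve, fun lam hlam h hh => ?_,
    fun lam hlam h hh => ?_, fun hfin => ?_, fun _ => ?_⟩
  · rw [hg.ofReal_lt_criticalCurve_iff hlam hh, sub_pos]
  · rw [hg.criticalCurve_le_ofReal_iff hlam hh, sub_eq_zero]
  · exact hg.continuousOn_criticalCurve subset_rfl (convex_Ici 0)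
      (fun _ _ hpos => Ici_mem_nhds hpos) hfin
  · exact hg.continuousOn_criticalCurve Set.Ico_subset_Ici_self (convex_Ico _ _)
      (fun _ hlam hpos => Ico_mem_nhds hpos hlam.2)
      fun _ hlam => hg.criticalCurve_lt_top_of_lt_sSup hlam.1 hlam.2
end

section
/- (Concentration lemma for restricted free energies.) Assume the disorder law satisfies the deviation inequality with constant C. Let N be even, m ∈ {0, 2, …, N}, and let Ω_m be a set of walk paths with P(Ω_m) > 0 such that 𝒩 = m for every path in Ω_m. Then for every u ≥ 0, ℙ( F_{N,ω}(Ω_m) − E_ℙ[F_{N,ω}(Ω_m)] ≥ u ) ≤ C exp( − u² N² / (4 C λ² m) ). -/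
open MeasureTheory ProbabilityTheory Filter Finset

open MeasureTheory ProbabilityTheory Filter Finset

/-!
As a function of `ω_1, …, ω_N`, `log Z_{N,ω}(Ω_m)` is, up to a constant, a log-sum-exp of
energies that are affine in `ω`, hence convex. Every path of `Ω_m` spends exactly `m` steps in
the lower half plane, so by Cauchy–Schwarz changing `ω` moves each energy by at most
`2|λ|√m ‖ω - ω'‖`; thus `F_{N,ω}(Ω_m)` is `2|λ|√m / N`-Lipschitz, and the deviation inequality
with this constant is the claim.
-/

open Real

section LogSumExp

variable {ι : Type*} {s : Finset ι}

theorem log_sum_exp_le_of_le_add (hs : s.Nonempty) {f g : ι → ℝ} {B : ℝ}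
    (hfg : ∀ i ∈ s, f i ≤ g i + B) :
    log (∑ i ∈ s, exp (f i)) ≤ log (∑ i ∈ s, exp (g i)) + B := by
  have hg : 0 < ∑ i ∈ s, exp (g i) := sum_pos (fun i _ => exp_pos _) hs
  rw [← log_exp B, ← log_mul hg.ne' (exp_pos B).ne', sum_mul]
  refine log_le_log (sum_pos (fun i _ => exp_pos _) hs) (sum_le_sum fun i hi => ?_)
  rw [← exp_add]
  exact exp_le_exp.2 (hfg i hi)

/-- The weights `exp (H i x - log ∑ j, exp (H j x))` sum to one, so convexity of `exp`, applied
termwise, bounds the normalized sum at a convex combination by one. -/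
theorem convexOn_log_sum_exp {E : Type*} [AddCommGroup E] [Module ℝ E] (hs : s.Nonempty)
    {H : ι → E → ℝ} (hH : ∀ i ∈ s, ConvexOn ℝ Set.univ (H i)) :
    ConvexOn ℝ Set.univ (fun x => log (∑ i ∈ s, exp (H i x))) := by
  have hZ : ∀ x, 0 < ∑ i ∈ s, exp (H i x) := fun x => sum_pos (fun i _ => exp_pos _) hs
  have hnorm : ∀ x, ∑ i ∈ s, exp (H i x - log (∑ j ∈ s, exp (H j x))) = 1 := fun x => by
    simp_rw [exp_sub, ← sum_div, exp_log (hZ x)]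
    exact div_self (hZ x).ne'
  refine ⟨convex_univ, fun x _ y _ a b ha hb hab => ?_⟩
  set Lx := log (∑ i ∈ s, exp (H i x))
  set Ly := log (∑ i ∈ s, exp (H i y))
  have hterm : ∀ i ∈ s, exp (H i (a • x + b • y) - (a * Lx + b * Ly)) ≤
      a * exp (H i x - Lx) + b * exp (H i y - Ly) := fun i hi => by
    have hHi := (hH i hi).2 (Set.mem_univ x) (Set.mem_univ y) ha hb hab
    have hexp := convexOn_exp.2 (Set.mem_univ (H i x - Lx)) (Set.mem_univ (H i y - Ly)) ha hb hab
    simp only [smul_eq_mul] at hHi hexp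
    exact (exp_le_exp.2 (by linarith)).trans hexp
  have hsum : ∑ i ∈ s, exp (H i (a • x + b • y)) / exp (a * Lx + b * Ly) ≤ 1 := by
    calc ∑ i ∈ s, exp (H i (a • x + b • y)) / exp (a * Lx + b * Ly)
        ≤ ∑ i ∈ s, (a * exp (H i x - Lx) + b * exp (H i y - Ly)) := by
          simp_rw [← exp_sub]
          exact sum_le_sum hterm
      _ = 1 := by rw [sum_add_distrib, ← mul_sum, ← mul_sum, hnorm, hnorm, mul_one, mul_one, hab]
  rw [← sum_div, div_le_one (exp_pos _)] at hsum
  exact (log_le_iff_le_exp (hZ _)).2 hsum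

end LogSumExp

theorem abs_sum_le_sqrt_card_mul_sqrt_sum_sq {ι : Type*} (s : Finset ι) (f : ι → ℝ) :
    |∑ i ∈ s, f i| ≤ √(#s) * √(∑ i ∈ s, f i ^ 2) := by
  rw [← sqrt_sq_eq_abs, ← sqrt_mul (Nat.cast_nonneg _)]
  exact sqrt_le_sqrt sq_sum_le_card_mul_sum_sq

theorem sum_Icc_one_eq_sum_fin {M : Type*} [AddCommMonoid M] (N : ℕ) (f : ℕ → M) :
    ∑ n ∈ Icc 1 N, f n = ∑ i : Fin N, f (i + 1) := by
  rw [Fin.sum_univ_eq_sum_range (fun i => f (i + 1)), range_eq_Ico, sum_Ico_add' f 0 N 1]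
  rfl

def energy (lam h : ℝ) (N : ℕ) (ω : ℕ → ℝ) (ε : ℕ → Bool) : ℝ :=
  -(2 * lam) * ∑ n ∈ lowSet ε N, (ω n + h)

theorem convexOn_energy (lam h : ℝ) (N : ℕ) (ε : ℕ → Bool) :
    ConvexOn ℝ Set.univ (fun ω => energy lam h N ω ε) := by
  refine ⟨convex_univ, fun ω _ ω' _ a b _ _ hab => le_of_eq ?_⟩
  simp only [energy, Pi.add_apply, Pi.smul_apply, smul_eq_mul, mul_sum, ← sum_add_distrib]
  refine sum_congr rfl fun n _ => ?_
  linear_combination (-(2 * lam) * h) * hab.symm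

open Classical in
noncomputable def admissiblePaths (N : ℕ) (A : (ℕ → Bool) → Prop) : Finset (Fin N → Bool) :=
  univ.filter fun ε => A (extendPath N ε)

section Polymer

variable {lam h : ℝ} {N : ℕ} {A : (ℕ → Bool) → Prop}

theorem Zev_eq_sum_exp_energy (ω : ℕ → ℝ) :
    Zev lam h N ω A =
      (1 / 2) ^ N * ∑ ε ∈ admissiblePaths N A, exp (energy lam h N ω (extendPath N ε)) := by
  classical
  rw [Zev, pathE, admissiblePaths, sum_filter]
  congr 1
  refine sum_congr rfl fun ε _ => ?_
  simp only [ind, weight, energy]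
  split_ifs <;> simp

theorem mem_admissiblePaths {ε : Fin N → Bool} : ε ∈ admissiblePaths N A ↔ A (extendPath N ε) := by
  classical
  simp [admissiblePaths]

theorem admissiblePaths_nonempty (hpos : 0 < pathE N (fun ε => ind (A ε))) :
    (admissiblePaths N A).Nonempty := by
  by_contra hempty
  have hzero : pathE N (fun ε => ind (A ε)) = 0 := by
    refine mul_eq_zero_of_right _ (sum_eq_zero fun ε _ => if_neg fun hε => hempty ?_)
    exact ⟨ε, mem_admissiblePaths.2 hε⟩
  exact hpos.ne' hzero

theorem log_Zev_eq (hS : (admissiblePaths N A).Nonempty) (ω : ℕ → ℝ) :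
    log (Zev lam h N ω A) =
      N * log (1 / 2) +
        log (∑ ε ∈ admissiblePaths N A, exp (energy lam h N ω (extendPath N ε))) := by
  rw [Zev_eq_sum_exp_energy, log_mul (by positivity) (sum_pos (fun _ _ => exp_pos _) hS).ne',
    log_pow]

theorem energy_congr {ω ω' : ℕ → ℝ} (hω : ∀ n ∈ Icc 1 N, ω n = ω' n) (ε : ℕ → Bool) :
    energy lam h N ω ε = energy lam h N ω' ε := by
  unfold energy
  congr 1
  exact sum_congr rfl fun n hn => by rw [hω n (filter_subset _ _ hn)]

theorem Zev_congr {ω ω' : ℕ → ℝ} (hω : ∀ n ∈ Icc 1 N, ω n = ω' n) :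
    Zev lam h N ω A = Zev lam h N ω' A := by
  simp_rw [Zev_eq_sum_exp_energy, energy_congr hω]

theorem abs_energy_sub_le {m : ℕ} {ε : ℕ → Bool} (hε : NVis ε N = m) (ω ω' : ℕ → ℝ) :
    |energy lam h N ω ε - energy lam h N ω' ε| ≤
      2 * |lam| * √m * √(∑ n ∈ Icc 1 N, (ω n - ω' n) ^ 2) := by
  have hdiff : energy lam h N ω ε - energy lam h N ω' ε =
      -(2 * lam) * ∑ n ∈ lowSet ε N, (ω n - ω' n) := by
    simp only [energy, ← mul_sub, ← sum_sub_distrib, add_sub_add_right_eq_sub]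
  have hsq : ∑ n ∈ lowSet ε N, (ω n - ω' n) ^ 2 ≤ ∑ n ∈ Icc 1 N, (ω n - ω' n) ^ 2 :=
    sum_le_sum_of_subset_of_nonneg (filter_subset _ _) fun _ _ _ => sq_nonneg _
  rw [hdiff, abs_mul, abs_neg, abs_mul, abs_two, mul_assoc (2 * |lam|)]
  gcongr
  calc |∑ n ∈ lowSet ε N, (ω n - ω' n)|
      ≤ √(#(lowSet ε N)) * √(∑ n ∈ lowSet ε N, (ω n - ω' n) ^ 2) :=
        abs_sum_le_sqrt_card_mul_sqrt_sum_sq _ _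
    _ ≤ √m * √(∑ n ∈ Icc 1 N, (ω n - ω' n) ^ 2) := by
        rw [← NVis, hε]
        gcongr

end Polymer

section FreeEnergy

variable {lam h : ℝ} {N m : ℕ} {A : (ℕ → Bool) → Prop}

theorem convexOn_log_Zev (hS : (admissiblePaths N A).Nonempty) :
    ConvexOn ℝ Set.univ (fun ω => log (Zev lam h N ω A)) := by
  refine ((convexOn_log_sum_exp hS fun ε _ =>
    convexOn_energy lam h N (extendPath N ε)).add_const
    (N * log (1 / 2))).congr fun ω _ => ((log_Zev_eq hS ω).trans (add_comm _ _)).symm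

theorem log_Zev_le_add (hS : (admissiblePaths N A).Nonempty) (hA : ∀ ε, A ε → NVis ε N = m)
    (ω ω' : ℕ → ℝ) :
    log (Zev lam h N ω A) ≤
      log (Zev lam h N ω' A) + 2 * |lam| * √m * √(∑ n ∈ Icc 1 N, (ω n - ω' n) ^ 2) := by
  have hle := log_sum_exp_le_of_le_add hS fun ε hε =>
    le_add_of_sub_left_le ((le_abs_self _).trans
      (abs_energy_sub_le (lam := lam) (h := h) (hA _ (mem_admissiblePaths.1 hε)) ω ω'))
  rw [log_Zev_eq hS, log_Zev_eq hS]
  linarith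

theorem abs_log_Zev_sub_le (hS : (admissiblePaths N A).Nonempty) (hA : ∀ ε, A ε → NVis ε N = m)
    (ω ω' : ℕ → ℝ) :
    |log (Zev lam h N ω A) - log (Zev lam h N ω' A)| ≤
      2 * |lam| * √m * √(∑ n ∈ Icc 1 N, (ω n - ω' n) ^ 2) := by
  have hsymm : ∑ n ∈ Icc 1 N, (ω' n - ω n) ^ 2 = ∑ n ∈ Icc 1 N, (ω n - ω' n) ^ 2 :=
    sum_congr rfl fun n _ => by ring
  have h₁ := log_Zev_le_add (lam := lam) (h := h) hS hA ω ω'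
  have h₂ := log_Zev_le_add (lam := lam) (h := h) hS hA ω' ω
  rw [hsymm] at h₂
  exact abs_sub_le_iff.2 ⟨by linarith, by linarith⟩

theorem measurable_log_Zev : Measurable (fun ω => log (Zev lam h N ω A)) := by
  simp_rw [Zev_eq_sum_exp_energy, energy]
  fun_prop

theorem integrable_log_Zev {P : Measure (ℕ → ℝ)} [IsFiniteMeasure P]
    (hsq : ∀ n, Integrable (fun ω : ℕ → ℝ => ω n ^ 2) P)
    (hS : (admissiblePaths N A).Nonempty) (hA : ∀ ε, A ε → NVis ε N = m) :
    Integrable (fun ω => log (Zev lam h N ω A)) P := by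
  set K := 2 * |lam| * √m
  refine Integrable.mono' ((integrable_const (|log (Zev lam h N 0 A)| + K)).add
      ((integrable_finsetSum (Icc 1 N) fun n _ => hsq n).const_mul K))
    measurable_log_Zev.aestronglyMeasurable (Eventually.of_forall fun ω => ?_)
  have hlip := abs_log_Zev_sub_le (lam := lam) (h := h) hS hA ω 0
  simp only [Pi.zero_apply, sub_zero] at hlip
  set q := ∑ n ∈ Icc 1 N, ω n ^ 2
  -- `√q ≤ 1 + q` dominates the Lipschitz bound at `0` by the square-integrable coordinates.
  have hq : √q ≤ 1 + q := by
    nlinarith [sq_sqrt (sum_nonneg fun n _ => sq_nonneg (ω n) : 0 ≤ q), sqrt_nonneg q]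
  have hK : 0 ≤ K := by positivity
  rw [norm_eq_abs]
  calc |log (Zev lam h N ω A)| ≤ |log (Zev lam h N 0 A)| + K * √q := by
        have := abs_sub_abs_le_abs_sub (log (Zev lam h N ω A)) (log (Zev lam h N 0 A))
        linarith
    _ ≤ |log (Zev lam h N 0 A)| + K + K * q := by nlinarith

end FreeEnergy

/-- Places `x : Fin N → ℝ` at the times `1, …, N`, matching the indexing `ω (i + 1)` of
`DevIneq`. -/
noncomputable def extendDisorder (N : ℕ) : (Fin N → ℝ) →ₗ[ℝ] ℕ → ℝ :=
  LinearMap.pi fun n => if hn : n - 1 < N then LinearMap.proj ⟨n - 1, hn⟩ else 0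

theorem extendDisorder_apply {N : ℕ} (x : Fin N → ℝ) (n : ℕ) :
    extendDisorder N x n = if hn : n - 1 < N then x ⟨n - 1, hn⟩ else 0 := by
  unfold extendDisorder
  split_ifs <;> simp [*]

theorem extendDisorder_apply_succ {N : ℕ} (x : Fin N → ℝ) (i : Fin N) :
    extendDisorder N x (i + 1) = x i := by
  simp [extendDisorder_apply]

theorem extendDisorder_shift_apply {N : ℕ} (ω : ℕ → ℝ) {n : ℕ} (hn : n ∈ Icc 1 N) :
    extendDisorder N (fun i => ω (i + 1)) n = ω n := by
  obtain ⟨h1, h2⟩ := mem_Icc.1 hn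
  rw [extendDisorder_apply, dif_pos (by omega), Nat.sub_add_cancel h1]

section FreeEnergyOnFin

variable {lam h : ℝ} {N m : ℕ} {A : (ℕ → Bool) → Prop}

theorem log_Zev_extendDisorder_shift (ω : ℕ → ℝ) :
    log (Zev lam h N (extendDisorder N fun i => ω (i + 1)) A) / N = log (Zev lam h N ω A) / N := by
  rw [Zev_congr fun n hn => extendDisorder_shift_apply ω hn]

theorem convexOn_log_Zev_extendDisorder_div (hS : (admissiblePaths N A).Nonempty) :
    ConvexOn ℝ Set.univ (fun x => log (Zev lam h N (extendDisorder N x) A) / N) := by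
  simpa only [div_eq_inv_mul, smul_eq_mul, Function.comp_apply, Set.preimage_univ] using
    ((convexOn_log_Zev hS).comp_linearMap (extendDisorder N)).smul (inv_nonneg.2 N.cast_nonneg)

theorem abs_log_Zev_extendDisorder_div_sub_le (hS : (admissiblePaths N A).Nonempty)
    (hA : ∀ ε, A ε → NVis ε N = m) (x y : Fin N → ℝ) :
    |log (Zev lam h N (extendDisorder N x) A) / N - log (Zev lam h N (extendDisorder N y) A) / N| ≤
      2 * |lam| * √m / N * √(∑ i, (x i - y i) ^ 2) := by
  have hsum : ∑ n ∈ Icc 1 N, (extendDisorder N x n - extendDisorder N y n) ^ 2 =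
      ∑ i, (x i - y i) ^ 2 := by
    simp only [sum_Icc_one_eq_sum_fin, extendDisorder_apply_succ]
  rw [← sub_div, abs_div, Nat.abs_cast, div_mul_eq_mul_div, ← hsum]
  exact div_le_div_of_nonneg_right (abs_log_Zev_sub_le hS hA _ _) N.cast_nonneg

end FreeEnergyOnFin

theorem BasicSetup.integrable_sq_coord {mu : Measure ℝ} {P : Measure (ℕ → ℝ)}
    (hsetup : BasicSetup mu P) (n : ℕ) : Integrable (fun ω : ℕ → ℝ => ω n ^ 2) P := by
  obtain ⟨-, -, -, hvar, -, hmap, -⟩ := hsetup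
  have hsq : Integrable (fun x : ℝ => x ^ 2) mu := Integrable.of_integral_ne_zero (by simp [hvar])
  rw [← hmap n] at hsq
  exact hsq.comp_measurable (measurable_pi_apply n)

theorem concentration_restricted_free_energy_general
    (mu : Measure ℝ) (P : Measure (ℕ → ℝ)) (hsetup : BasicSetup mu P)
    (C : ℝ) (hdev : DevIneq P C)
    (lam h : ℝ) (N m : ℕ)
    (A : (ℕ → Bool) → Prop) (hA : ∀ ε, A ε → NVis ε N = m)
    (hpos : 0 < pathE N (fun ε => ind (A ε))) :
    ∀ u : ℝ, 0 ≤ u →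
      (P {ω | (∫ ω', Real.log (Zev lam h N ω' A) / N ∂P) + u
          ≤ Real.log (Zev lam h N ω A) / N}).toReal
        ≤ C * Real.exp (-(u ^ 2 * (N : ℝ) ^ 2) / (4 * C * lam ^ 2 * m)) := by
  intro u hu
  have : IsProbabilityMeasure P := hsetup.2.1
  have hS := admissiblePaths_nonempty hpos
  have hint := (integrable_log_Zev (lam := lam) (h := h) hsetup.integrable_sq_coord hS hA).div_const
    (N : ℝ)
  have hdev' := hdev.2 N _ (2 * |lam| * √m / N) (by positivity)
    (convexOn_log_Zev_extendDisorder_div hS) (abs_log_Zev_extendDisorder_div_sub_le hS hA)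
    (by simpa only [log_Zev_extendDisorder_shift] using hint) u hu
  have hexp : -u ^ 2 / (C * (2 * |lam| * √m / N) ^ 2) =
      -(u ^ 2 * N ^ 2) / (4 * C * lam ^ 2 * m) := by
    rw [div_pow, mul_pow, mul_pow, sq_abs, sq_sqrt m.cast_nonneg, mul_div_assoc',
      div_div_eq_mul_div]
    ring
  simpa only [log_Zev_extendDisorder_shift, hexp] using hdev'

/-- Concentration lemma for restricted free energies.
If the disorder satisfies the deviation inequality with constant `C`, `N` is even,
`m ∈ {0,2,…,N}`, and `Ω_m` is a set of paths of positive probability on which `𝒩 = m`,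
then for every `u ≥ 0`,
`P( F_{N,ω}(Ω_m) - 𝔼[F_{N,ω}(Ω_m)] ≥ u ) ≤ C exp(-u²N²/(4Cλ²m))`. -/
theorem concentration_restricted_free_energy
    (mu : Measure ℝ) (P : Measure (ℕ → ℝ)) (hsetup : BasicSetup mu P)
    (C : ℝ) (hdev : DevIneq P C)
    (lam h : ℝ) (hlam : 0 ≤ lam) (hh : 0 ≤ h)
    (N m : ℕ) (hN : Even N) (hm : Even m) (hmN : m ≤ N)
    (A : (ℕ → Bool) → Prop) (hA : ∀ ε, A ε → NVis ε N = m)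
    (hpos : 0 < pathE N (fun ε => ind (A ε))) :
    ∀ u : ℝ, 0 ≤ u →
      (P {ω | (∫ ω', Real.log (Zev lam h N ω' A) / N ∂P) + u
          ≤ Real.log (Zev lam h N ω A) / N}).toReal
        ≤ C * Real.exp (-(u ^ 2 * (N : ℝ) ^ 2) / (4 * C * lam ^ 2 * m)) :=
  concentration_restricted_free_energy_general mu P hsetup C hdev lam h N m A hA hpos
end

section
/- (Integration-by-parts identity for symmetric random variables.) Let η be a real symmetric random variable (η ∼ −η) with E[η²] = 1, and let G : ℝ → ℝ be three times continuously differentiable with all expectations and integrals below finite. Then E[ η G(η) ] = E[ G′(η) ] + E[ (η² − 1) ∫_0^η G″(u) du ] − (1/4) E[ |η| ∫_{−|η|}^{|η|} (η² − u²) G‴(u) du ]. -/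
open MeasureTheory ProbabilityTheory Filter Finset

open MeasureTheory ProbabilityTheory Filter Finset intervalIntegral

/-! The identity is exact pointwise up to a defect `D(x)`, the difference of the two sides
evaluated at a deterministic `x`. Integrating by parts in `u` gives `D` in closed form
(an antiderivative of `(a² - u²) G'''(u)` is `(a² - u²) G''(u) + 2u G'(u) - 2G(u)`), and from it
`D(x) + D(-x) = 2 (x² - 1) G'(0)`. Since `η` and `-η` have the same law,
`2 E[D(η)] = E[D(η) + D(-η)] = 2 G'(0) (E[η²] - 1) = 0`. -/

theorem ProbabilityTheory.IdentDistrib.two_mul_integral_comp_of_neg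
    {Ω : Type*} [MeasurableSpace Ω] {P : Measure Ω} {X : Ω → ℝ} (hX : IdentDistrib X (-X) P P)
    {f g : ℝ → ℝ} (hf : Measurable f) (hfg : ∀ x, f x + f (-x) = g x)
    (hint : Integrable (fun ω => f (X ω)) P) :
    2 * ∫ ω, f (X ω) ∂P = ∫ ω, g (X ω) ∂P := by
  have hfX : IdentDistrib (f ∘ X) (f ∘ (-X)) P P := hX.comp hf
  have hint_neg : Integrable (fun ω => f (-X ω)) P := hfX.integrable_snd hint
  calc 2 * ∫ ω, f (X ω) ∂P = ∫ ω, f (X ω) ∂P + ∫ ω, f (-X ω) ∂P := by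
        rw [two_mul]
        exact congrArg _ hfX.integral_eq
    _ = ∫ ω, g (X ω) ∂P := by
        rw [← integral_add hint hint_neg]
        simp only [hfg]

theorem integral_sq_sub_sq_mul_deriv_deriv_deriv {G : ℝ → ℝ} (hG : ContDiff ℝ 3 G) (a : ℝ) :
    ∫ u in -a..a, (a ^ 2 - u ^ 2) * deriv (deriv (deriv G)) u
      = 2 * a * (deriv G a + deriv G (-a)) - 2 * (G a - G (-a)) := by
  have hG₁ : Differentiable ℝ G := hG.differentiable (by norm_num)
  have hG₂ : Differentiable ℝ (deriv G) := (hG.of_le (by norm_num)).differentiable_deriv_two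
  have hG₃ : Differentiable ℝ (deriv (deriv G)) := by fun_prop
  have hΦ : ∀ u, HasDerivAt
      (fun u => (a ^ 2 - u ^ 2) * deriv (deriv G) u + 2 * u * deriv G u - 2 * G u)
      ((a ^ 2 - u ^ 2) * deriv (deriv (deriv G)) u) u := by
    intro u
    have h := ((((hasDerivAt_const u (a ^ 2)).sub (hasDerivAt_pow 2 u)).mul (hG₃ u).hasDerivAt).add
      (((hasDerivAt_id u).const_mul 2).mul (hG₂ u).hasDerivAt)).sub
      ((hG₁ u).hasDerivAt.const_mul 2)
    refine h.congr_deriv ?_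
    simp only [Pi.sub_apply, id_eq]
    ring
  rw [integral_eq_sub_of_hasDerivAt (fun u _ => hΦ u)
    ((by fun_prop : Continuous _).intervalIntegrable _ _)]
  ring

noncomputable def symmetricIbpDefect (G : ℝ → ℝ) (x : ℝ) : ℝ :=
  x * G x - deriv G x - (x ^ 2 - 1) * (∫ u in (0 : ℝ)..x, deriv (deriv G) u)
    + 1 / 4 * (|x| * ∫ u in -|x|..|x|, (x ^ 2 - u ^ 2) * deriv (deriv (deriv G)) u)

theorem symmetricIbpDefect_eq {G : ℝ → ℝ} (hG : ContDiff ℝ 3 G) (x : ℝ) :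
    symmetricIbpDefect G x = x * G x - deriv G x - (x ^ 2 - 1) * (deriv G x - deriv G 0)
      + x ^ 2 / 2 * (deriv G x + deriv G (-x)) - x / 2 * (G x - G (-x)) := by
  have hG₂ : Differentiable ℝ (deriv G) := (hG.of_le (by norm_num)).differentiable_deriv_two
  have hG₂c : Continuous (deriv (deriv G)) := (hG.deriv' (n := 2)).continuous_deriv (by norm_num)
  rw [symmetricIbpDefect, integral_deriv_eq_sub (fun u _ => hG₂ u) (hG₂c.intervalIntegrable _ _),
    ← sq_abs x, integral_sq_sub_sq_mul_deriv_deriv_deriv hG]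
  rcases abs_choice x with h | h <;> simp only [h, neg_neg, neg_sq] <;> ring

theorem continuous_symmetricIbpDefect {G : ℝ → ℝ} (hG : ContDiff ℝ 3 G) :
    Continuous (symmetricIbpDefect G) := by
  have hG₀ : Continuous G := hG.continuous
  have hG₁ : Continuous (deriv G) := hG.continuous_deriv (by norm_num)
  rw [funext (symmetricIbpDefect_eq hG)]
  fun_prop

theorem symmetricIbpDefect_add_neg {G : ℝ → ℝ} (hG : ContDiff ℝ 3 G) (x : ℝ) :
    symmetricIbpDefect G x + symmetricIbpDefect G (-x) = 2 * (x ^ 2 - 1) * deriv G 0 := by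
  rw [symmetricIbpDefect_eq hG, symmetricIbpDefect_eq hG, neg_neg]
  ring

/-- Integration-by-parts identity for symmetric random variables.
If `η` is symmetric with `E[η²] = 1` and `G` is `C³` with all quantities integrable, then
`E[ηG(η)] = E[G'(η)] + E[(η²-1)∫₀^η G''] - (1/4) E[|η| ∫_{-|η|}^{|η|} (η²-u²) G'''(u) du]`. -/
theorem symmetric_integration_by_parts
    {Ω : Type*} [MeasurableSpace Ω] (P : Measure Ω) [IsProbabilityMeasure P]
    (eta : Ω → ℝ) (hmeas : Measurable eta)
    (hsymm : P.map (fun ω => -eta ω) = P.map eta)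
    (hvar : (∫ ω, (eta ω) ^ 2 ∂P) = 1)
    (G : ℝ → ℝ) (hG : ContDiff ℝ 3 G)
    (hint₀ : Integrable (fun ω => eta ω * G (eta ω)) P)
    (hint₁ : Integrable (fun ω => deriv G (eta ω)) P)
    (hint₂ : Integrable (fun ω =>
      ((eta ω) ^ 2 - 1) * ∫ u in (0 : ℝ)..(eta ω), deriv (deriv G) u) P)
    (hint₃ : Integrable (fun ω =>
      |eta ω| * ∫ u in (-|eta ω|)..(|eta ω|),
        ((eta ω) ^ 2 - u ^ 2) * deriv (deriv (deriv G)) u) P) :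
    (∫ ω, eta ω * G (eta ω) ∂P)
      = (∫ ω, deriv G (eta ω) ∂P)
        + (∫ ω, (((eta ω) ^ 2 - 1) * ∫ u in (0 : ℝ)..(eta ω), deriv (deriv G) u) ∂P)
        - (1 / 4) * ∫ ω, (|eta ω| * ∫ u in (-|eta ω|)..(|eta ω|),
            ((eta ω) ^ 2 - u ^ 2) * deriv (deriv (deriv G)) u) ∂P := by
  have hlaw : IdentDistrib eta (-eta) P P :=
    ⟨hmeas.aemeasurable, hmeas.neg.aemeasurable, hsymm.symm⟩
  have hsq : Integrable (fun ω => eta ω ^ 2) P :=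
    Integrable.of_integral_ne_zero (by rw [hvar]; exact one_ne_zero)
  have hint₀₁ : Integrable (fun ω => eta ω * G (eta ω) - deriv G (eta ω)) P := hint₀.sub hint₁
  have hint₀₁₂ : Integrable (fun ω => eta ω * G (eta ω) - deriv G (eta ω)
      - ((eta ω) ^ 2 - 1) * ∫ u in (0 : ℝ)..(eta ω), deriv (deriv G) u) P := hint₀₁.sub hint₂
  have hdefect : Integrable (fun ω => symmetricIbpDefect G (eta ω)) P :=
    hint₀₁₂.add (hint₃.const_mul (1 / 4))
  have hzero : ∫ ω, symmetricIbpDefect G (eta ω) ∂P = 0 := by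
    have h := hlaw.two_mul_integral_comp_of_neg (continuous_symmetricIbpDefect hG).measurable
      (symmetricIbpDefect_add_neg hG) hdefect
    rw [MeasureTheory.integral_mul_const, MeasureTheory.integral_const_mul,
      integral_sub hsq (integrable_const 1), hvar] at h
    simpa using h
  have hsplit : ∫ ω, symmetricIbpDefect G (eta ω) ∂P
      = (∫ ω, eta ω * G (eta ω) ∂P) - (∫ ω, deriv G (eta ω) ∂P)
        - (∫ ω, (((eta ω) ^ 2 - 1) * ∫ u in (0 : ℝ)..(eta ω), deriv (deriv G) u) ∂P)
        + (1 / 4) * ∫ ω, (|eta ω| * ∫ u in (-|eta ω|)..(|eta ω|),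
            ((eta ω) ^ 2 - u ^ 2) * deriv (deriv (deriv G)) u) ∂P := by
    rw [← MeasureTheory.integral_const_mul, ← integral_sub hint₀ hint₁,
      ← integral_sub hint₀₁ hint₂, ← integral_add hint₀₁₂ (hint₃.const_mul _)]
    rfl
  linarith
end
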